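/- arXiv:1212.6334 — 2 statements merged into one kernel-verified Lean document; each statement's English description precedes it below -/
import Mathlib

section
/- Let I = [2^{-k}ℓ₁, 2^{-k}(ℓ₁+1)) and J = [2^{-k}ℓ₂, 2^{-k}(ℓ₂+1)) be dyadic intervals of equal length 2^{-k}, let n be a nonnegative integer, and define I ⊕ J := [2^{-k}(ℓ₁⊕ℓ₂), 2^{-k}(ℓ₁⊕ℓ₂+1)). Then for almost all x ∈ I and y ∈ J one has w_{I,n}(x) · w_{J,n}(y) = w_{I⊕J, n}(x ⊕ y), where x ⊕ y is the bitwise XOR of the binary expansions of x and y. -/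
open MeasureTheory

/-- The `j`-th binary digit of a nonnegative real number `x`. -/
noncomputable def bdigit (x : ℝ) (j : ℤ) : ℕ := (Int.toNat ⌊x / 2 ^ j⌋) % 2

/-- Binary digitwise addition (XOR) of nonnegative reals. -/
noncomputable def dxor (x y : ℝ) : ℝ :=
  ∑' j : ℤ, (((bdigit x j + bdigit y j) % 2 : ℕ) : ℝ) * 2 ^ j

/-- The dyadic interval `[2^{-k} l, 2^{-k} (l+1))`. -/
def dyadicI (k : ℤ) (l : ℕ) : Set ℝ :=
  Set.Ico ((2 : ℝ) ^ (-k) * l) ((2 : ℝ) ^ (-k) * (l + 1))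

/-- The L^∞-normalized Walsh wave packet `w_{I,n}` for `I = [2^{-k} l, 2^{-k}(l+1))`. -/
noncomputable def walsh (k : ℤ) (l n : ℕ) (x : ℝ) : ℝ :=
  Set.indicator (dyadicI k l)
    (fun x => (-1 : ℝ) ^ (∑ j ∈ Finset.range (n + 1),
      (Nat.testBit n j).toNat * bdigit x (-(j : ℤ) - k - 1))) x

/-- The Walsh–Fourier average `[f]_{I,n} = |I|^{-1} ∫_I f w_{I,n}`. -/
noncomputable def avg (k : ℤ) (l n : ℕ) (f : ℝ → ℝ) : ℝ :=
  (2 : ℝ) ^ k * ∫ x in dyadicI k l, f x * walsh k l n x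

/-- A real-valued dyadic step function supported on `[0,1)²`. -/
def IsDyadicStep (F : ℝ → ℝ → ℝ) : Prop :=
  ∃ (s : Finset ((ℤ × ℕ) × (ℤ × ℕ))) (c : (ℤ × ℕ) × (ℤ × ℕ) → ℝ),
    (∀ p ∈ s, dyadicI p.1.1 p.1.2 ⊆ Set.Ico (0 : ℝ) 1 ∧
      dyadicI p.2.1 p.2.2 ⊆ Set.Ico (0 : ℝ) 1) ∧
    ∀ x y : ℝ, F x y = ∑ p ∈ s, c p * Set.indicator (dyadicI p.1.1 p.1.2) 1 x *
      Set.indicator (dyadicI p.2.1 p.2.2) 1 y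

/-- `F` is constant on dyadic squares with sides of length `2^{-M}`. -/
def ConstOnSquares (M : ℕ) (F : ℝ → ℝ → ℝ) : Prop :=
  ∀ l₁ l₂ : ℕ, ∀ x ∈ dyadicI (M : ℤ) l₁, ∀ x' ∈ dyadicI (M : ℤ) l₁,
    ∀ y ∈ dyadicI (M : ℤ) l₂, ∀ y' ∈ dyadicI (M : ℤ) l₂, F x y = F x' y'

/-! For almost every pair `(x, y)` the binary digits of `x` and `y` agree at arbitrarily
negative positions: otherwise, for fixed `x`, the digits of `y` below some scale are forced, which
leaves only countably many `y`. For such a pair the digit sequence `(x_j + y_j) mod 2` is not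
eventually `1` towards `-∞`, so it is the genuine binary expansion of `x ⊕ y`. Its digits at
positions `≥ -k` are those of `ℓ₁ ⊕ ℓ₂`, which puts `x ⊕ y` in `I ⊕ J`, and the Walsh phases
only read digits below `-k`, where `(-1)^a (-1)^b = (-1)^((a + b) mod 2)` gives the identity. -/

theorem measurable_bdigit (j : ℤ) : Measurable fun x : ℝ => bdigit x j :=
  Measurable.comp (g := fun n : ℤ => n.toNat % 2) measurable_from_top
    (Int.measurable_floor.comp (measurable_id.div_const _))

theorem bdigit_le_one (x : ℝ) (j : ℤ) : bdigit x j ≤ 1 :=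
  Nat.le_of_lt_succ (Nat.mod_lt _ two_pos)

theorem bdigit_eq_natFloor (x : ℝ) (j : ℤ) : bdigit x j = ⌊x / 2 ^ j⌋₊ % 2 := by
  rw [bdigit, Int.floor_toNat]

theorem natFloor_div_two_zpow_add (x : ℝ) (p : ℤ) (s : ℕ) :
    ⌊x / 2 ^ (p + s)⌋₊ = ⌊x / 2 ^ p⌋₊ / 2 ^ s := by
  rw [zpow_add₀ two_ne_zero, zpow_natCast, ← div_div, ← Nat.floor_div_natCast]
  push_cast
  rfl

theorem bdigit_add_natCast (x : ℝ) (p : ℤ) (s : ℕ) :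
    bdigit x (p + s) = (⌊x / 2 ^ p⌋₊.testBit s).toNat := by
  rw [bdigit_eq_natFloor, natFloor_div_two_zpow_add, Nat.toNat_testBit]

theorem natFloor_div_two_zpow_eq_add_bdigit (x : ℝ) (j : ℤ) :
    ⌊x / 2 ^ j⌋₊ = 2 * ⌊x / 2 ^ (j + 1)⌋₊ + bdigit x j := by
  rw [bdigit_eq_natFloor, show j + 1 = j + (1 : ℕ) by simp, natFloor_div_two_zpow_add, pow_one,
    Nat.div_add_mod]

theorem mem_dyadicI_iff {k : ℤ} {l : ℕ} {x : ℝ} :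
    x ∈ dyadicI k l ↔ 0 ≤ x ∧ ⌊x / 2 ^ (-k)⌋₊ = l := by
  have h2 : (0 : ℝ) < 2 ^ (-k) := by positivity
  rw [dyadicI, Set.mem_Ico, ← le_div_iff₀' h2, ← div_lt_iff₀' h2]
  constructor
  · rintro ⟨hl, hu⟩
    have hq : 0 ≤ x / 2 ^ (-k) := (Nat.cast_nonneg l).trans hl
    exact ⟨by simpa using (le_div_iff₀ h2).1 hq, (Nat.floor_eq_iff hq).2 ⟨hl, hu⟩⟩
  · rintro ⟨hx, rfl⟩
    exact (Nat.floor_eq_iff (by positivity)).1 rfl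

theorem bdigit_of_mem_dyadicI {k : ℤ} {l : ℕ} {x : ℝ} (hx : x ∈ dyadicI k l) (s : ℕ) :
    bdigit x (-k + s) = (l.testBit s).toNat := by
  rw [bdigit_add_natCast, (mem_dyadicI_iff.1 hx).2]

theorem mem_dyadicI_of_bdigit {k : ℤ} {l : ℕ} {x : ℝ} (hx : 0 ≤ x)
    (h : ∀ s : ℕ, bdigit x (-k + s) = (l.testBit s).toNat) : x ∈ dyadicI k l := by
  refine mem_dyadicI_iff.2 ⟨hx, Nat.eq_of_testBit_eq fun s => ?_⟩
  have := h s
  rw [bdigit_add_natCast] at this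
  cases h₁ : Nat.testBit _ s <;> cases h₂ : l.testBit s <;> simp_all

noncomputable def ofBinaryDigits (a : ℤ → ℕ) : ℝ := ∑' j : ℤ, (a j : ℝ) * 2 ^ j

theorem ofBinaryDigits_nonneg (a : ℤ → ℕ) : 0 ≤ ofBinaryDigits a :=
  tsum_nonneg fun _ => by positivity

theorem ofBinaryDigits_div_two_zpow (a : ℤ → ℕ) (p : ℤ) :
    ofBinaryDigits a / 2 ^ p = ofBinaryDigits (fun j => a (j + p)) := by
  rw [ofBinaryDigits, ofBinaryDigits, ← tsum_div_const, ← (Equiv.addRight p).tsum_eq]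
  congr 1 with j
  rw [Equiv.coe_addRight, zpow_add₀ two_ne_zero]
  field_simp

/-- The digits below `0` contribute less than `1`, strictly so because one of them vanishes. -/
theorem natFloor_ofBinaryDigits {a : ℤ → ℕ} (ha : ∀ j, a j ≤ 1) {B : ℕ}
    (hB : ∀ j : ℤ, B ≤ j → a j = 0) (h0 : ∃ j < 0, a j = 0) :
    ⌊ofBinaryDigits a⌋₊ = ∑ i ∈ Finset.range B, a i * 2 ^ i := by
  set f : ℤ → ℝ := fun j => (a j : ℝ) * 2 ^ j
  have hintPart : HasSum (fun i : ℕ => f i) (∑ i ∈ Finset.range B, a i * 2 ^ i : ℕ) := by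
    push_cast
    refine hasSum_sum_of_ne_finset_zero fun i hi => ?_
    simp [f, hB i (by simpa using hi)]
  have hgeom : HasSum (fun i : ℕ => (2 : ℝ) ^ (-((i : ℤ) + 1))) 1 := by
    convert hasSum_geometric_two' 1 using 1
    funext i
    rw [zpow_neg, zpow_add_one₀ two_ne_zero, zpow_natCast]
    ring
  have hle : ∀ i : ℕ, f (-(i + 1)) ≤ (2 : ℝ) ^ (-((i : ℤ) + 1)) := fun i =>
    mul_le_of_le_one_left (by positivity) (by exact_mod_cast ha _)
  have hfracPart := (hgeom.summable.of_nonneg_of_le (fun i => by positivity) hle).hasSum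
  obtain ⟨j, hj, haj⟩ := h0
  have hlt : ∑' i : ℕ, f (-(i + 1)) < 1 := by
    refine hasSum_lt (i := (-j - 1).toNat) hle ?_ hfracPart hgeom
    rw [show -(((-j - 1).toNat : ℕ) + 1 : ℤ) = j by omega]
    simp only [f, haj, Nat.cast_zero, zero_mul]
    positivity
  rw [ofBinaryDigits, (hintPart.of_nat_of_neg_add_one hfracPart).tsum_eq,
    Nat.floor_eq_iff (by positivity)]
  exact ⟨le_add_of_nonneg_right (tsum_nonneg fun i => by positivity), by gcongr⟩

theorem bdigit_ofBinaryDigits {a : ℤ → ℕ} (ha : ∀ j, a j ≤ 1) {B : ℤ}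
    (hB : ∀ j, B ≤ j → a j = 0) (h0 : ∀ p, ∃ j < p, a j = 0) (p : ℤ) :
    bdigit (ofBinaryDigits a) p = a p := by
  set N := (B - p).toNat
  have hfloor := natFloor_ofBinaryDigits (a := fun j => a (j + p)) (B := N + 1) (fun j => ha _)
    (fun j hj => hB _ (by omega))
    (by obtain ⟨j, hj, haj⟩ := h0 p; exact ⟨j - p, by omega, by simpa using haj⟩)
  have hhigh : 2 ∣ ∑ i ∈ Finset.range N, a (↑(i + 1) + p) * 2 ^ (i + 1) :=
    Finset.dvd_sum fun i _ => dvd_mul_of_dvd_right (dvd_pow_self 2 i.succ_ne_zero) _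
  rw [bdigit_eq_natFloor, ofBinaryDigits_div_two_zpow, hfloor, Finset.sum_range_succ']
  have := ha p
  simp only [CharP.cast_eq_zero, zero_add, pow_zero, mul_one]
  omega

theorem neg_one_pow_sum_mul_add_sum_mul {R ι : Type*} [Ring R] (s : Finset ι)
    (w u v : ι → ℕ) :
    (-1 : R) ^ (∑ i ∈ s, w i * u i) * (-1) ^ (∑ i ∈ s, w i * v i) =
      (-1) ^ (∑ i ∈ s, w i * ((u i + v i) % 2)) := by
  rw [← pow_add, ← Finset.sum_add_distrib, neg_one_pow_eq_pow_mod_two,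
    neg_one_pow_eq_pow_mod_two (∑ i ∈ s, _)]
  congr 1
  refine Nat.ModEq.sum fun i _ => ?_
  rw [← mul_add]
  exact (Nat.ModEq.mul_left _ (Nat.mod_modEq _ _)).symm

theorem walsh_mul_walsh_of_exists_bdigit_eq {k : ℤ} {l₁ l₂ : ℕ} (n : ℕ) {x y : ℝ}
    (hx : x ∈ dyadicI k l₁) (hy : y ∈ dyadicI k l₂)
    (hxy : ∀ p, ∃ j < p, bdigit x j = bdigit y j) :
    walsh k l₁ n x * walsh k l₂ n y = walsh k (l₁ ^^^ l₂) n (dxor x y) := by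
  set c : ℤ → ℕ := fun j => (bdigit x j + bdigit y j) % 2
  have hc_high : ∀ s : ℕ, c (-k + s) = ((l₁ ^^^ l₂).testBit s).toNat := by
    intro s
    simp only [c, bdigit_of_mem_dyadicI hx, bdigit_of_mem_dyadicI hy, Nat.testBit_xor]
    cases l₁.testBit s <;> cases l₂.testBit s <;> rfl
  have hdigit : ∀ j, bdigit (dxor x y) j = c j := by
    -- `dxor x y` unfolds to `ofBinaryDigits c`
    refine bdigit_ofBinaryDigits (a := c) (B := -k + (l₁ ^^^ l₂ : ℕ))
      (fun j => Nat.le_of_lt_succ (Nat.mod_lt _ two_pos)) (fun j hj => ?_) (fun p => ?_)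
    · obtain ⟨s, rfl⟩ : ∃ s : ℕ, j = -k + s := ⟨(j + k).toNat, by omega⟩
      rw [hc_high, Nat.testBit_eq_false_of_lt]
      · rfl
      · exact Nat.lt_two_pow_self.trans_le (Nat.pow_le_pow_right two_pos (by omega))
    · obtain ⟨j, hj, hxyj⟩ := hxy p
      exact ⟨j, hj, by simp only [c, hxyj]; omega⟩
  have hz : dxor x y ∈ dyadicI k (l₁ ^^^ l₂) :=
    mem_dyadicI_of_bdigit (ofBinaryDigits_nonneg c) fun s => (hdigit _).trans (hc_high s)
  simp only [walsh, Set.indicator_of_mem hx, Set.indicator_of_mem hy, Set.indicator_of_mem hz,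
    hdigit]
  exact neg_one_pow_sum_mul_add_sum_mul _ _ _ _

theorem eq_zero_of_abs_lt_two_zpow {d : ℝ} {p : ℤ} (h : ∀ j ≤ p, |d| < 2 ^ j) : d = 0 := by
  by_contra hd
  obtain ⟨i, hi⟩ := exists_pow_lt_of_lt_one (div_pos (abs_pos.2 hd) (zpow_pos two_pos p))
    (by norm_num : (1 / 2 : ℝ) < 1)
  have := h (p - i) (by omega)
  rw [zpow_sub₀ two_ne_zero, zpow_natCast] at this
  rw [lt_div_iff₀ (zpow_pos two_pos p), one_div_pow] at hi
  linarith [show 1 / 2 ^ i * (2 : ℝ) ^ p = 2 ^ p / 2 ^ i by ring]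

theorem eq_of_natFloor_eq_of_bdigit_eq {y y' : ℝ} (hy : 0 ≤ y) (hy' : 0 ≤ y') {p : ℤ}
    (hp : ⌊y / 2 ^ p⌋₊ = ⌊y' / 2 ^ p⌋₊) (hdig : ∀ j < p, bdigit y j = bdigit y' j) :
    y = y' := by
  have hfloor : ∀ j ≤ p, ⌊y / 2 ^ j⌋₊ = ⌊y' / 2 ^ j⌋₊ := by
    intro j hj
    induction j, hj using Int.leInductionDown with
    | base => exact hp
    | pred j hj ih =>
      rw [natFloor_div_two_zpow_eq_add_bdigit y, natFloor_div_two_zpow_eq_add_bdigit y',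
        sub_add_cancel, ih, hdig _ (by omega)]
  rw [← sub_eq_zero]
  refine eq_zero_of_abs_lt_two_zpow (p := p) fun j hj => ?_
  have h2 : (0 : ℝ) < 2 ^ j := by positivity
  have := Int.abs_sub_lt_one_of_floor_eq_floor (a := y / 2 ^ j) (b := y' / 2 ^ j)
    (by rw [← Int.natCast_floor_eq_floor (by positivity),
      ← Int.natCast_floor_eq_floor (by positivity), hfloor j hj])
  rwa [← sub_div, abs_div, abs_of_pos h2, div_lt_one h2] at this

theorem countable_setOf_bdigit_eq (p : ℤ) (a : ℤ → ℕ) :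
    {y : ℝ | 0 ≤ y ∧ ∀ j < p, bdigit y j = a j}.Countable :=
  (Set.mapsTo_univ (fun y : ℝ => ⌊y / 2 ^ p⌋₊) _).countable_of_injOn
    (fun _ hy _ hy' h => eq_of_natFloor_eq_of_bdigit_eq hy.1 hy'.1 h fun j hj =>
      (hy.2 j hj).trans (hy'.2 j hj).symm)
    Set.countable_univ

theorem ae_exists_bdigit_eq :
    ∀ᵐ z : ℝ × ℝ, 0 ≤ z.2 → ∀ p : ℤ, ∃ j < p, bdigit z.1 j = bdigit z.2 j := by
  suffices h : ∀ p : ℤ, ∀ᵐ z : ℝ × ℝ, 0 ≤ z.2 → ∃ j < p, bdigit z.1 j = bdigit z.2 j by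
    filter_upwards [ae_all_iff.2 h] with z hz h₂ p using hz p h₂
  intro p
  set S := {z : ℝ × ℝ | 0 ≤ z.2 ∧ ∀ j < p, bdigit z.1 j ≠ bdigit z.2 j}
  have hS : MeasurableSet S := by
    simp only [S, Set.ofPred_and, Set.ofPred_forall]
    exact (measurableSet_le measurable_const measurable_snd).inter <|
      .iInter fun j => .iInter fun _ =>
        (measurableSet_eq_fun ((measurable_bdigit j).comp measurable_fst)
          ((measurable_bdigit j).comp measurable_snd)).compl
  have hS_null : volume S = 0 := by
    rw [Measure.volume_eq_prod, Measure.measure_prod_null hS]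
    refine Filter.Eventually.of_forall fun x => Set.Countable.measure_zero ?_ _
    refine (countable_setOf_bdigit_eq p fun j => 1 - bdigit x j).mono ?_
    rintro y ⟨hy₀, hy⟩
    refine ⟨hy₀, fun j hj => ?_⟩
    have : bdigit x j ≠ bdigit y j := hy j hj
    have := bdigit_le_one x j
    have := bdigit_le_one y j
    omega
  rw [ae_iff]
  refine measure_mono_null (fun z hz => ?_) hS_null
  push Not at hz
  exact hz

theorem walsh_mul_walsh_xor (k : ℤ) (l₁ l₂ n : ℕ) :
    ∀ᵐ p : ℝ × ℝ ∂(volume : Measure (ℝ × ℝ)),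
      p.1 ∈ dyadicI k l₁ → p.2 ∈ dyadicI k l₂ →
        walsh k l₁ n p.1 * walsh k l₂ n p.2 = walsh k (l₁ ^^^ l₂) n (dxor p.1 p.2) := by
  filter_upwards [ae_exists_bdigit_eq] with z hz hx hy
  exact walsh_mul_walsh_of_exists_bdigit_eq n hx hy (hz (mem_dyadicI_iff.1 hy).1)
end

section
/- Let I, J, Ω be dyadic intervals with |I| = |J| = 2|Ω|^{-1}. Then for almost all x₁, x₂, y₁, y₂: 4·Σ_{α,β∈{0,1}} Π_{i∈{1,2}} w_{I_α,0}(x_i) w_{J_β×Ω}(y_i) − Σ_{γ∈{0,1}} Π_{i∈{1,2}} w_{I,0}(x_i) w_{J×Ω_γ}(y_i) = Σ_{γ∈{0,1}} Π_{i∈{1,2}} w_{I,1}(x_i) w_{J×Ω_γ}(y_i). -/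
open MeasureTheory

/-! The identity holds at every point. The lowest bit `γ` of `2n + γ` multiplies the binary
digit of `x` that selects the half of `I` containing `x`, while the remaining bits of `n` read `x`
at the next finer scale; hence `w_{I,2n+γ} = w_{I₀,n} + (-1)^γ w_{I₁,n}`. Substituting this on both
sides (with `n = 0` in the `x`-variables) turns the claim into a polynomial identity, in which the
cross terms cancel after summing over `γ`. -/

lemma mem_dyadicI_iff_floor {k : ℤ} {l : ℕ} {x : ℝ} :
    x ∈ dyadicI k l ↔ ⌊x * 2 ^ k⌋ = l := by
  have h2k : (0 : ℝ) < 2 ^ k := by positivity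
  rw [dyadicI, Set.mem_Ico, Int.floor_eq_iff, zpow_neg, ← div_eq_inv_mul, ← div_eq_inv_mul,
    div_le_iff₀' h2k, lt_div_iff₀' h2k, mul_comm x]
  push_cast
  rfl

lemma bdigit_neg_eq_floor_mul (x : ℝ) (k : ℤ) : bdigit x (-k) = (⌊x * 2 ^ k⌋).toNat % 2 := by
  rw [bdigit, zpow_neg, div_inv_eq_mul]

lemma floor_mul_two_zpow_eq_div_two (x : ℝ) (k : ℤ) : ⌊x * 2 ^ k⌋ = ⌊x * 2 ^ (k + 1)⌋ / 2 := by
  have h := Int.floor_div_natCast (x * 2 ^ (k + 1)) 2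
  rw [Nat.cast_ofNat, Nat.cast_ofNat] at h
  rw [← h, zpow_add_one₀ two_ne_zero, mul_div_assoc, mul_div_cancel_right₀ _ two_ne_zero]

lemma mem_dyadicI_succ_two_mul_add_iff {k : ℤ} {l b : ℕ} (hb : b < 2) {x : ℝ} :
    x ∈ dyadicI (k + 1) (2 * l + b) ↔ x ∈ dyadicI k l ∧ bdigit x (-(k + 1)) = b := by
  rw [mem_dyadicI_iff_floor, mem_dyadicI_iff_floor, bdigit_neg_eq_floor_mul,
    floor_mul_two_zpow_eq_div_two x k]
  omega

lemma sum_range_testBit_mul_of_le (f : ℕ → ℕ) {n N : ℕ} (hN : n ≤ N) :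
    ∑ j ∈ Finset.range N, (n.testBit j).toNat * f j =
      ∑ j ∈ Finset.range n, (n.testBit j).toNat * f j := by
  refine Finset.eventually_constant_sum (fun j hj => ?_) hN
  rw [Nat.testBit_lt_two_pow ((Nat.lt_two_pow_self).trans_le (Nat.pow_le_pow_right two_pos hj))]
  simp

lemma sum_range_testBit_two_mul_add (f : ℕ → ℕ) (n : ℕ) {γ : ℕ} (hγ : γ < 2) :
    ∑ j ∈ Finset.range (2 * n + γ + 1), ((2 * n + γ).testBit j).toNat * f j =
      γ * f 0 + ∑ j ∈ Finset.range (n + 1), (n.testBit j).toNat * f (j + 1) := by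
  have hdiv : (2 * n + γ) / 2 = n := by omega
  have hmod : (decide ((2 * n + γ) % 2 = 1)).toNat = γ := by interval_cases γ <;> simp
  rw [Finset.sum_range_succ', add_comm]
  simp only [Nat.testBit_succ, hdiv, Nat.testBit_zero, hmod]
  rw [sum_range_testBit_mul_of_le _ (by omega : n ≤ 2 * n + γ),
    sum_range_testBit_mul_of_le _ (Nat.le_succ n)]

lemma walsh_two_mul_add (k : ℤ) (l n : ℕ) {γ : ℕ} (hγ : γ < 2) (x : ℝ) :
    walsh k l (2 * n + γ) x =
      walsh (k + 1) (2 * l) n x + (-1) ^ γ * walsh (k + 1) (2 * l + 1) n x := by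
  have hexp := sum_range_testBit_two_mul_add (fun j => bdigit x (-(j : ℤ) - k - 1)) n hγ
  have hshift : ∀ j : ℕ, -((j + 1 : ℕ) : ℤ) - k - 1 = -(j : ℤ) - (k + 1) - 1 := fun j => by
    push_cast; ring
  have hzero : -((0 : ℕ) : ℤ) - k - 1 = -(k + 1) := by push_cast; ring
  simp only [hshift, hzero] at hexp
  have hleft := mem_dyadicI_succ_two_mul_add_iff (k := k) (l := l) (x := x) two_pos
  rw [add_zero] at hleft
  have hright := mem_dyadicI_succ_two_mul_add_iff (k := k) (l := l) (x := x) one_lt_two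
  have hdigit : bdigit x (-(k + 1)) < 2 := Nat.mod_lt _ two_pos
  classical
  simp only [walsh, Set.indicator_apply, hleft, hright, hexp]
  generalize bdigit x (-(k + 1)) = d at hdigit ⊢
  interval_cases d <;> by_cases hx : x ∈ dyadicI k l <;> simp [hx, pow_add]

theorem multitile_identity_B2 (k : ℤ) (l₁ l₂ n : ℕ) :
    ∀ᵐ p : ℝ × ℝ × ℝ × ℝ ∂(volume : Measure (ℝ × ℝ × ℝ × ℝ)),
      4 * (∑ α ∈ Finset.range 2, ∑ β ∈ Finset.range 2,
          (walsh (k + 1) (2 * l₁ + α) 0 p.1 * walsh (k + 1) (2 * l₂ + β) n p.2.2.1) *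
          (walsh (k + 1) (2 * l₁ + α) 0 p.2.1 * walsh (k + 1) (2 * l₂ + β) n p.2.2.2))
        - (∑ γ ∈ Finset.range 2,
          (walsh k l₁ 0 p.1 * walsh k l₂ (2 * n + γ) p.2.2.1) *
          (walsh k l₁ 0 p.2.1 * walsh k l₂ (2 * n + γ) p.2.2.2))
      = ∑ γ ∈ Finset.range 2,
          (walsh k l₁ 1 p.1 * walsh k l₂ (2 * n + γ) p.2.2.1) *
          (walsh k l₁ 1 p.2.1 * walsh k l₂ (2 * n + γ) p.2.2.2) := by
  refine Filter.Eventually.of_forall fun p => ?_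
  have hsum : ∀ x, walsh k l₁ 0 x = walsh (k + 1) (2 * l₁) 0 x + walsh (k + 1) (2 * l₁ + 1) 0 x :=
    fun x => by simpa using walsh_two_mul_add k l₁ 0 two_pos x
  have hdiff : ∀ x, walsh k l₁ 1 x = walsh (k + 1) (2 * l₁) 0 x - walsh (k + 1) (2 * l₁ + 1) 0 x :=
    fun x => by simpa [sub_eq_add_neg] using walsh_two_mul_add k l₁ 0 one_lt_two x
  simp only [Finset.sum_range_succ, Finset.sum_range_zero, zero_add,
    walsh_two_mul_add k l₂ n two_pos, walsh_two_mul_add k l₂ n one_lt_two]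
  simp only [add_zero, hsum, hdiff]
  ring
end
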